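/- arXiv:1811.04153 — 4 statements merged into one kernel-verified Lean document; each statement's English description precedes it below -/
import Mathlib

section
/- Let B be an integral domain and let A be a retract of B, i.e., there exist ring homomorphisms ι : A → B and π : B → A with π ∘ ι = id_A (equivalently, A is a subring of B and B ≅ A ⊕ I as A-modules for some ideal I of B). Then A is algebraically closed in B: if an element b ∈ B (viewed via ι) is a root of a nonzero polynomial with coefficients in A, then b lies in the image of ι. -/
/-!
Put `a := π b` and `c := b - ι a`, so that `π c = 0` and `c` is a root of the Taylor shift of `p`
at `a`. Writing that shift as `X ^ m * r` with `r(0) ≠ 0`, the retraction sends `r(c)` to `r(0)`,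
so `r(c) ≠ 0`; as `B` is a domain, `c ^ m * r(c) = 0` forces `c = 0`, i.e. `b = ι a`.
-/

open Polynomial

theorem Polynomial.eval₂_taylor {R S : Type*} [CommSemiring R] [CommSemiring S] (f : R →+* S)
    (r : R) (p : R[X]) (x : S) : (taylor r p).eval₂ f x = p.eval₂ f (x + f r) := by
  simp [taylor_apply, eval₂_comp]

section Retraction

variable {A B : Type*} [CommRing A] [CommRing B] {ι : A →+* B} {π : B →+* A}

theorem apply_eval₂_eq_coeff_zero (h : π.comp ι = RingHom.id A) {c : B} (hc : π c = 0)
    (r : A[X]) : π (r.eval₂ ι c) = r.coeff 0 := by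
  rw [hom_eval₂, h, hc, eval₂_id, coeff_zero_eq_eval_zero]

theorem eq_zero_of_eval₂_eq_zero_of_apply_eq_zero [IsDomain B] (h : π.comp ι = RingHom.id A)
    {c : B} (hc : π c = 0) {q : A[X]} (hq : q ≠ 0) (hroot : q.eval₂ ι c = 0) : c = 0 := by
  obtain ⟨r, hqr, hXr⟩ := q.exists_eq_pow_rootMultiplicity_mul_and_not_dvd hq 0
  rw [C_0, sub_zero] at hqr hXr
  have hr : r.eval₂ ι c ≠ 0 := fun hr0 =>
    hXr (X_dvd_iff.mpr (by rw [← apply_eval₂_eq_coeff_zero h hc, hr0, map_zero]))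
  rw [hqr, eval₂_mul, eval₂_pow, eval₂_X] at hroot
  exact eq_zero_of_pow_eq_zero ((mul_eq_zero.mp hroot).resolve_right hr)

end Retraction

/-- If `A` is a retract of an integral domain `B` (witnessed by ring homomorphisms
`ι : A → B` and `π : B → A` with `π ∘ ι = id`), then `A` is algebraically closed in `B`:
any `b : B` which is a root of a nonzero polynomial with coefficients in `A`
(via `ι`) lies in the image of `ι`. -/
theorem retract_algebraically_closed {A B : Type*} [CommRing A] [CommRing B] [IsDomain B]
    (ι : A →+* B) (π : B →+* A) (h : π.comp ι = RingHom.id A)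
    (b : B) (p : Polynomial A) (hp : p ≠ 0)
    (hroot : Polynomial.eval₂ ι b p = 0) :
    b ∈ Set.range ι := by
  have hπι : π (ι (π b)) = π b := RingHom.congr_fun h (π b)
  have hc : π (b - ι (π b)) = 0 := by rw [map_sub, hπι, sub_self]
  have hshift : (taylor (π b) p).eval₂ ι (b - ι (π b)) = 0 := by
    rwa [eval₂_taylor, sub_add_cancel]
  have hb := eq_zero_of_eval₂_eq_zero_of_apply_eq_zero h hc ((taylor_eq_zero _ _).not.mpr hp) hshift
  exact ⟨π b, (sub_eq_zero.mp hb).symm⟩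
end

section
/- Let B be an integral domain which is a unique factorization domain, and let A be a retract of B, i.e., there exist ring homomorphisms ι : A → B and π : B → A with π ∘ ι = id_A. Then A is a unique factorization domain. -/
/-- If `B` is an integral domain which is a UFD and `A` is a retract of `B`
(witnessed by ring homomorphisms `ι : A → B` and `π : B → A` with `π ∘ ι = id`),
then `A` is (an integral domain and) a UFD. -/
theorem retract_ufd {A B : Type*} [CommRing A] [CommRing B] [IsDomain B]
    [UniqueFactorizationMonoid B]
    (ι : A →+* B) (π : B →+* A) (h : π.comp ι = RingHom.id A) :
    ∃ _ : IsDomain A, UniqueFactorizationMonoid A := by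
  have hli : Function.LeftInverse π ι := fun a => by
    simpa using RingHom.congr_fun h a
  have hinj : Function.Injective ι := hli.injective
  haveI : IsDomain A := Function.Injective.isDomain ι hinj
  letI : GCDMonoid B := UniqueFactorizationMonoid.toGCDMonoid B
  -- units transfer back along ι
  have hunit : ∀ a : A, IsUnit (ι a) → IsUnit a := fun a hx => by
    have := hx.map π; rwa [hli a] at this
  -- divisibility transfers back along ι
  have hdvd : ∀ (x : B) (a : A), x ∣ ι a → π x ∣ a := fun x a ⟨t, ht⟩ =>
    ⟨π t, by rw [← hli a, ht, map_mul]⟩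
  haveI wfA : WfDvdMonoid A := by
    refine ⟨Subrelation.wf (r := InvImage DvdNotUnit ι) ?_
      (InvImage.wf ι (wellFounded_dvdNotUnit))⟩
    rintro a b ⟨ha, x, hx, rfl⟩
    exact ⟨fun h0 => ha (hinj (by simpa using h0)), ι x,
      fun hu => hx (hunit x hu), by rw [map_mul]⟩
  refine ⟨inferInstance, { wfA with irreducible_iff_prime := ?_ }⟩
  intro p
  constructor
  · intro hp
    refine ⟨hp.ne_zero, hp.not_isUnit, fun a b hab => ?_⟩
    set d := gcd (ι p) (ι a) with hd
    have hcp : π d ∣ p := hdvd d p (gcd_dvd_left _ _)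
    have hca : π d ∣ a := hdvd d a (gcd_dvd_right _ _)
    obtain ⟨t, ht⟩ := hcp
    rcases hp.isUnit_or_isUnit ht with hu | hu
    · -- π d is a unit : show p ∣ b
      right
      have h2 : ι p ∣ d * ι b := by
        calc ι p ∣ gcd (ι p * ι b) (ι a * ι b) :=
              dvd_gcd (dvd_mul_right _ _) (by rw [← map_mul]; exact map_dvd ι hab)
          _ ∣ gcd (ι p) (ι a) * ι b := (gcd_mul_right' (ι b) (ι p) (ι a)).dvd
      have h3 : p ∣ π d * b := by
        have := map_dvd π h2
        rwa [hli, map_mul, hli] at this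
      obtain ⟨u, hu'⟩ := hu
      obtain ⟨s, hs⟩ := h3
      exact ⟨(u⁻¹ : Aˣ) * s, by
        rw [← hu'] at hs
        calc b = (u⁻¹ : Aˣ) * (↑u * b) := by rw [← mul_assoc, Units.inv_mul, one_mul]
          _ = (u⁻¹ : Aˣ) * (p * s) := by rw [← hs]
          _ = p * ((u⁻¹ : Aˣ) * s) := by ring⟩
    · -- t is a unit, so p ∣ π d ∣ a
      left
      obtain ⟨u, rfl⟩ := hu
      have : p ∣ π d := ⟨(u⁻¹ : Aˣ), by rw [ht, mul_assoc, Units.mul_inv, mul_one]⟩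
      exact this.trans hca
  · exact Prime.irreducible
end

section
/- Let k be a field and let B = k[x_1, …, x_n] be the polynomial ring in n variables over k. Let A be a retract of B over k, i.e., there exist k-algebra homomorphisms ι : A → B and π : B → A with π ∘ ι = id_A. Then A is an integral domain that is finitely generated as a k-algebra, A is a unique factorization domain, and the unit group of A equals the image of k^*, i.e., every unit of A lies in (the image of) k. -/
/-!
Everything passes from `B = k[x₁, …, xₙ]` to its retract `A` along `ι` (injective) or `π`
(surjective). For the UFD property, `A` is a Noetherian domain, so factorisations into
irreducibles exist, and irreducibles are prime because the decomposition property
(`a ∣ xy ⇒ a = a₁a₂` with `a₁ ∣ x`, `a₂ ∣ y`) of `ι a` in the UFD `B` is pushed back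
by `π`.
-/

open Function

theorem DecompositionMonoid.of_leftInverse {A B F G : Type*} [Semigroup A] [Semigroup B]
    [DecompositionMonoid B] [FunLike F A B] [MulHomClass F A B] [FunLike G B A]
    [MulHomClass G B A] (ι : F) (π : G) (hπι : LeftInverse π ι) : DecompositionMonoid A where
  primal a x y hxy := by
    obtain ⟨d₁, d₂, hd₁, hd₂, hd⟩ :=
      DecompositionMonoid.primal (ι a) (map_mul ι x y ▸ map_dvd ι hxy)
    refine ⟨π d₁, π d₂, hπι x ▸ map_dvd π hd₁, hπι y ▸ map_dvd π hd₂, ?_⟩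
    rw [← map_mul, ← hd, hπι a]

theorem mem_range_algebraMap_of_isUnit_of_leftInverse {k A B : Type*} [CommSemiring k]
    [Semiring A] [Semiring B] [Algebra k A] [Algebra k B] {ι : A →ₐ[k] B} {π : B →ₐ[k] A}
    (hπι : LeftInverse π ι) (hB : ∀ b : B, IsUnit b → b ∈ Set.range (algebraMap k B))
    {a : A} (ha : IsUnit a) : a ∈ Set.range (algebraMap k A) := by
  obtain ⟨c, hc⟩ := hB (ι a) (ha.map ι)
  exact ⟨c, by rw [← π.commutes, hc, hπι a]⟩

theorem MvPolynomial.mem_range_algebraMap_of_isUnit {σ R : Type*} [CommRing R] [IsReduced R]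
    {p : MvPolynomial σ R} (hp : IsUnit p) :
    p ∈ Set.range (algebraMap R (MvPolynomial σ R)) := by
  obtain ⟨r, -, rfl⟩ := isUnit_iff_eq_C_of_isReduced.mp hp
  exact ⟨r, rfl⟩

/-- If `A` is a retract of the polynomial ring `k[x₁, …, xₙ]` over a field `k`, then `A`
is an integral domain, finitely generated as a `k`-algebra, a UFD, and its units all come
from `k`. -/
theorem retract_of_polynomialRing_properties {k : Type*} [Field k] (n : ℕ)
    {A : Type*} [CommRing A] [Algebra k A]
    (ι : A →ₐ[k] MvPolynomial (Fin n) k) (π : MvPolynomial (Fin n) k →ₐ[k] A)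
    (h : π.comp ι = AlgHom.id k A) :
    ∃ _ : IsDomain A, Algebra.FiniteType k A ∧ UniqueFactorizationMonoid A ∧
      ∀ a : A, IsUnit a → ∃ c : k, algebraMap k A c = a := by
  have hπι : LeftInverse π ι := AlgHom.congr_fun h
  have : IsDomain A := hπι.injective.isDomain ι.toRingHom
  have : IsNoetherianRing A := isNoetherianRing_of_surjective _ _ π.toRingHom hπι.surjective
  have : DecompositionMonoid A := .of_leftInverse ι π hπι
  exact ⟨‹_›, .of_surjective π hπι.surjective, inferInstance, fun a ha =>
    mem_range_algebraMap_of_isUnit_of_leftInverse hπι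
      (fun _ ↦ MvPolynomial.mem_range_algebraMap_of_isUnit) ha⟩
end

section
/- Let k be a field, let B = k[x_1, …, x_n] be the polynomial ring in n variables over k, and let A be a retract of B over k witnessed by k-algebra homomorphisms ι : A → B and π : B → A with π ∘ ι = id_A. If the transcendence degree of A over k equals n, then ι is surjective, so that A is isomorphic to B = k[x_1, …, x_n] as a k-algebra. -/
/-!
The image under `ι` of a transcendence basis of `A` is algebraically independent of size `n` in
`k[x₁, …, xₙ]`, hence a transcendence basis there, so `k[x₁, …, xₙ]` is algebraic over `ι(A)`.
The kernel of `π` meets `ι(A)` only in `0`, and a nonzero ideal of a domain meets every subring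
over which the domain is algebraic. So `π` is injective, and then `ι` is surjective.
-/

open Algebra Cardinal Function

theorem AlgHom.injective_of_leftInverse_of_isAlgebraic {R A B : Type*} [CommRing R] [CommRing A]
    [CommRing B] [IsDomain B] [Algebra R A] [Algebra R B] {ι : A →ₐ[R] B} {π : B →ₐ[R] A}
    (h : LeftInverse π ι) [Algebra.IsAlgebraic ι.range B] : Injective π := by
  refine (injective_iff_map_eq_zero π).2 fun b hb => of_not_not fun hb0 => ?_
  refine Ideal.comap_ne_bot_of_algebraic_mem hb0 (RingHom.mem_ker.2 hb)
    (Algebra.IsAlgebraic.isAlgebraic (R := ι.range) b) ?_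
  rw [eq_bot_iff]
  rintro ⟨_, a, rfl⟩ ha
  have : a = 0 := (h a).symm.trans (RingHom.mem_ker.1 ha)
  exact Subtype.ext (by simp [this])

theorem AlgHom.isAlgebraic_range_of_isTranscendenceBasis {R A B ι : Type*} [CommRing R]
    [Nontrivial R] [CommRing A] [CommRing B] [NoZeroDivisors B] [Algebra R A] [Algebra R B]
    [_root_.Finite ι] {f : A →ₐ[R] B} (hf : Injective f) {x : ι → A}
    (hx : IsTranscendenceBasis R x) (hB : trdeg R B ≤ Nat.card ι) :
    Algebra.IsAlgebraic f.range B := by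
  have hfx : IsTranscendenceBasis R (f ∘ x) :=
    (hx.1.map' hf).isTranscendenceBasis_of_lift_trdeg_le_of_finite
      (by rw [← Nat.cast_card, lift_natCast]; exact (lift_le.2 hB).trans_eq (lift_natCast _))
  have hle : adjoin R (Set.range (f ∘ x)) ≤ f.range :=
    adjoin_le (by rintro _ ⟨i, rfl⟩; exact ⟨x i, rfl⟩)
  have := hfx.isAlgebraic
  exact ⟨fun b => (Algebra.IsAlgebraic.isAlgebraic b).tower_top_of_subalgebra_le hle⟩

/-- If `A` is a retract of `k[x₁, …, xₙ]` over a field `k`, witnessed by `ι, π`, and the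
transcendence degree of `A` over `k` equals `n` (i.e., `A` admits a transcendence basis
over `k` indexed by `Fin n`), then `ι` is surjective, so `A ≅ k[x₁, …, xₙ]`. -/
theorem retract_trdeg_top {k : Type*} [Field k] (n : ℕ)
    {A : Type*} [CommRing A] [Algebra k A]
    (ι : A →ₐ[k] MvPolynomial (Fin n) k) (π : MvPolynomial (Fin n) k →ₐ[k] A)
    (h : π.comp ι = AlgHom.id k A)
    (htr : ∃ x : Fin n → A, IsTranscendenceBasis k x) :
    Function.Surjective ι ∧ Nonempty (A ≃ₐ[k] MvPolynomial (Fin n) k) := by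
  obtain ⟨x, hx⟩ := htr
  have hπι : LeftInverse π ι := AlgHom.congr_fun h
  have := AlgHom.isAlgebraic_range_of_isTranscendenceBasis hπι.injective hx (by simp)
  have hπ := AlgHom.injective_of_leftInverse_of_isAlgebraic hπι
  have hι : Surjective ι := (hπι.rightInverse_of_injective hπ).surjective
  exact ⟨hι, ⟨AlgEquiv.ofBijective ι ⟨hπι.injective, hι⟩⟩⟩
end
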